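/- Assume product-form coefficients a_i = ∏_{q=1}^d a_{i_q}(q) with each (a_i(q))_{i∈ℤ} square-summable. For n∈ℕ^d and j∈ℤ^d set b_{n,j} = ∑_{i: 1≤i_q≤n_q ∀q} a_{i−j}, b_{n,j}(q) = ∑_{i=1}^{n_q} a_{i−j_q}(q), and b_n(q) = (∑_{j_q∈ℤ} b_{n,j}(q)²)^{1/2}. Then for all n, m ∈ ℕ^d, ∑_{j∈ℤ^d} b_{n,j} b_{m,j} = ∏_{q=1}^d ½ (b_n(q)² + b_m(q)² − b_{|n−m|}(q)²), where |n−m| is taken componentwise. -/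

import Mathlib

open MeasureTheory ProbabilityTheory Filter Topology BoundedContinuousFunction
open scoped ENNReal NNReal BigOperators

/-- Product-form coefficients `a_i = ∏_{q=1}^d a_{i_q}(q)`. -/
def prodCoef {d : ℕ} (aq : Fin d → ℤ → ℝ) (i : Fin d → ℤ) : ℝ :=
  ∏ q : Fin d, aq q (i q)

/-- The rectangle `Λ_n = {1,…,n_1} × ⋯ × {1,…,n_d} ⊂ ℤ^d`. -/
noncomputable def Lambda (d : ℕ) (n : Fin d → ℕ) : Finset (Fin d → ℤ) :=
  Fintype.piFinset fun q => Finset.Icc 1 (n q : ℤ)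

/-- `b_{n,j} = ∑_{i ∈ Λ_n} a_{i-j}` for product-form coefficients. -/
noncomputable def bProd {d : ℕ} (aq : Fin d → ℤ → ℝ) (n : Fin d → ℕ) (j : Fin d → ℤ) : ℝ :=
  ∑ i ∈ Lambda d n, prodCoef aq (i - j)

/-- One-dimensional coefficients `b_{n,j}(q) = ∑_{i=1}^{n_q} a_{i-j_q}(q)`. -/
noncomputable def b1 (a : ℤ → ℝ) (nq : ℕ) (jq : ℤ) : ℝ :=
  ∑ i ∈ Finset.Icc (1 : ℤ) (nq : ℤ), a (i - jq)

/-- `b_n(q) = (∑_{j_q ∈ ℤ} b_{n,j}(q)²)^{1/2}`. -/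
noncomputable def b1norm (a : ℤ → ℝ) (nq : ℕ) : ℝ :=
  Real.sqrt (∑' j : ℤ, (b1 a nq j) ^ 2)

/-!
The coefficients factor, `b_{n,j} = ∏_q b_{n,j}(q)`, so the sum over `ℤ^d` of the absolutely
summable products `b_{n,j} b_{m,j}` splits into a product of sums over `ℤ`. In one dimension,
`b_n · b_m` is polarized through `(b_n - b_m)²`; for `m ≤ n` the difference `b_{n,j} - b_{m,j}` is
the window sum `b_{n-m,j-m}`, so by translation invariance of `∑_j` its square sums to `b_{n-m}²`.
-/

open Finset

lemma summable_abs_mul_of_summable_sq {α : Type*} {f g : α → ℝ}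
    (hf : Summable fun x => f x ^ 2) (hg : Summable fun x => g x ^ 2) :
    Summable fun x => |f x * g x| := by
  refine .of_nonneg_of_le (fun _ => abs_nonneg _) (fun x => ?_) ((hf.add hg).div_const 2)
  rw [abs_mul, le_div_iff₀ two_pos, ← sq_abs (f x), ← sq_abs (g x)]
  nlinarith [sq_nonneg (|f x| - |g x|)]

lemma tsum_mul_eq_half_tsum_sq {α : Type*} {f g : α → ℝ}
    (hf : Summable fun x => f x ^ 2) (hg : Summable fun x => g x ^ 2) :
    ∑' x, f x * g x =
      1 / 2 * (∑' x, f x ^ 2 + ∑' x, g x ^ 2 - ∑' x, (f x - g x) ^ 2) := by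
  have hfg : Summable fun x => f x * g x := (summable_abs_mul_of_summable_sq hf hg).of_abs
  have hexpand : ∑' x, (f x - g x) ^ 2 = ∑' x, f x ^ 2 + ∑' x, g x ^ 2 - 2 * ∑' x, f x * g x := by
    rw [← hf.tsum_add hg, ← tsum_mul_left, ← (hf.add hg).tsum_sub (hfg.mul_left 2)]
    exact tsum_congr fun x => by ring
  linarith

lemma summable_sq_sum_sub {G : Type*} [AddGroup G] {a : G → ℝ} (ha : Summable fun i => a i ^ 2)
    (s : Finset G) : Summable fun j => (∑ i ∈ s, a (i - j)) ^ 2 := by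
  have hshift : ∀ i : G, Summable fun j => a (i - j) ^ 2 := fun i =>
    ha.comp_injective fun _ _ h => by simpa using h
  refine .of_nonneg_of_le (fun _ => sq_nonneg _) (fun j => sq_sum_le_card_mul_sum_sq)
    ((summable_sum fun i _ => hshift i).mul_left _)

lemma summable_sq_b1 {a : ℤ → ℝ} (ha : Summable fun i => a i ^ 2) (n : ℕ) :
    Summable fun j => b1 a n j ^ 2 :=
  summable_sq_sum_sub ha _

lemma b1_eq_sum_range (a : ℤ → ℝ) (n : ℕ) (j : ℤ) :
    b1 a n j = ∑ k ∈ range n, a (k + 1 - j) :=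
  sum_nbij' (fun i => (i - 1).toNat) (fun k => (k : ℤ) + 1)
    (by intro i; simp; omega) (by intro k; simp) (by intro i; simp; omega)
    (by intro k; simp) (by intro i hi; rw [mem_Icc] at hi; congr 1; omega)

lemma b1_add (a : ℤ → ℝ) (m k : ℕ) (j : ℤ) :
    b1 a (m + k) j = b1 a m j + b1 a k (j - m) := by
  simp only [b1_eq_sum_range, sum_range_add]
  congr 1
  exact sum_congr rfl fun i _ => by push_cast; ring_nf

lemma b1norm_sq (a : ℤ → ℝ) (n : ℕ) : b1norm a n ^ 2 = ∑' j, b1 a n j ^ 2 :=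
  Real.sq_sqrt (tsum_nonneg fun _ => sq_nonneg _)

lemma tsum_sq_b1_sub (a : ℤ → ℝ) (n m : ℕ) :
    ∑' j, (b1 a n j - b1 a m j) ^ 2 = b1norm a (Nat.dist n m) ^ 2 := by
  wlog h : m ≤ n generalizing n m
  · rw [Nat.dist_comm, ← this m n (by omega)]
    exact tsum_congr fun j => by ring
  obtain ⟨k, rfl⟩ := Nat.exists_eq_add_of_le h
  have hdist : Nat.dist (m + k) m = k := by simp [Nat.dist_eq_sub_of_le_right h]
  simp only [hdist, b1norm_sq, b1_add, add_sub_cancel_left]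
  exact (Equiv.subRight (m : ℤ)).tsum_eq fun j => b1 a k j ^ 2

lemma one_dim_polarization (a : ℤ → ℝ) (ha : Summable fun i => a i ^ 2) (n m : ℕ) :
    ∑' j, b1 a n j * b1 a m j =
      1 / 2 * (b1norm a n ^ 2 + b1norm a m ^ 2 - b1norm a (Nat.dist n m) ^ 2) := by
  rw [tsum_mul_eq_half_tsum_sq (summable_sq_b1 ha n) (summable_sq_b1 ha m),
    tsum_sq_b1_sub, b1norm_sq a n, b1norm_sq a m]

section PiProduct

variable {R κ : Type*} [NormedCommRing R]

lemma summable_norm_prod_pi : ∀ {d : ℕ} (f : Fin d → κ → R),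
    (∀ q, Summable fun x => ‖f q x‖) → Summable fun j : Fin d → κ => ‖∏ q, f q (j q)‖
  | 0, _, _ => .of_finite
  | d + 1, f, hf => by
    rw [← (Fin.consEquiv fun _ => κ).summable_iff]
    simpa [Function.comp_def, Fin.prod_univ_succ] using
      (hf 0).mul_norm (summable_norm_prod_pi (fun q => f q.succ) fun q => hf q.succ)

lemma tsum_prod_pi [CompleteSpace R] : ∀ {d : ℕ} (f : Fin d → κ → R),
    (∀ q, Summable fun x => ‖f q x‖) → ∑' j : Fin d → κ, ∏ q, f q (j q) = ∏ q, ∑' x, f q x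
  | 0, _, _ => by simp
  | d + 1, f, hf => by
    rw [← (Fin.consEquiv fun _ => κ).tsum_eq, Fin.prod_univ_succ,
      ← tsum_prod_pi (fun q => f q.succ) fun q => hf q.succ,
      tsum_mul_tsum_of_summable_norm (hf 0) (summable_norm_prod_pi _ fun q => hf q.succ)]
    simp [Fin.prod_univ_succ]

end PiProduct

lemma bProd_eq_prod_b1 {d : ℕ} (aq : Fin d → ℤ → ℝ) (n : Fin d → ℕ) (j : Fin d → ℤ) :
    bProd aq n j = ∏ q, b1 (aq q) (n q) (j q) :=
  (prod_univ_sum (fun q => Icc (1 : ℤ) (n q)) fun q i => aq q (i - j q)).symm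

theorem product_polarization_general
    (d : ℕ)
    (aq : Fin d → ℤ → ℝ) (hsq : ∀ q, Summable fun i : ℤ => (aq q i) ^ 2)
    (n m : Fin d → ℕ) :
    Summable (fun j : Fin d → ℤ => bProd aq n j * bProd aq m j) ∧
    ∑' j : Fin d → ℤ, bProd aq n j * bProd aq m j =
      ∏ q : Fin d, (1 / 2) * ((b1norm (aq q) (n q)) ^ 2 + (b1norm (aq q) (m q)) ^ 2 -
        (b1norm (aq q) (Nat.dist (n q) (m q))) ^ 2) := by
  have hfactor : (fun j => bProd aq n j * bProd aq m j) =
      fun j => ∏ q, b1 (aq q) (n q) (j q) * b1 (aq q) (m q) (j q) := by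
    ext j
    rw [bProd_eq_prod_b1, bProd_eq_prod_b1, prod_mul_distrib]
  have hnorm (q : Fin d) : Summable fun x => ‖b1 (aq q) (n q) x * b1 (aq q) (m q) x‖ :=
    summable_abs_mul_of_summable_sq (summable_sq_b1 (hsq q) _) (summable_sq_b1 (hsq q) _)
  rw [hfactor, tsum_prod_pi _ hnorm]
  exact ⟨(summable_norm_prod_pi _ hnorm).of_norm,
    prod_congr rfl fun q _ => one_dim_polarization (aq q) (hsq q) (n q) (m q)⟩

/-- product polarization identity:
`∑_{j∈ℤ^d} b_{n,j} b_{m,j} = ∏_q ½ (b_n(q)² + b_m(q)² - b_{|n-m|}(q)²)`. -/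
theorem product_polarization
    (d : ℕ) (hd : 1 ≤ d)
    (aq : Fin d → ℤ → ℝ) (hsq : ∀ q, Summable fun i : ℤ => (aq q i) ^ 2)
    (n m : Fin d → ℕ) :
    Summable (fun j : Fin d → ℤ => bProd aq n j * bProd aq m j) ∧
    ∑' j : Fin d → ℤ, bProd aq n j * bProd aq m j =
      ∏ q : Fin d, (1 / 2) * ((b1norm (aq q) (n q)) ^ 2 + (b1norm (aq q) (m q)) ^ 2 -
        (b1norm (aq q) (Nat.dist (n q) (m q))) ^ 2) :=
  product_polarization_general d aq hsq n m
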